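/- arXiv:2003.06981 — 4 statements merged into one kernel-verified Lean document; each statement's English description precedes it below -/
import Mathlib

section
/- Let (Ω, 𝓕, P) be a probability space, let m be a sub-σ-algebra of 𝓕, and let X, Y : Ω → ℝ be integrable random variables. Define G := {ω : E[X | m](ω) > E[Y | m](ω)}, which is m-measurable. Then the random variable Z := X·1_G + Y·1_{G^c} is integrable and satisfies E[Z | m] = max(E[X | m], E[Y | m]) P-almost everywhere. (This is the core of the paper's Lemma on the lattice property obtained by finite mixing of two controls.) -/
open MeasureTheory

section

variable {α E : Type*} [NormedAddCommGroup E] [NormedSpace ℝ E] [CompleteSpace E]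
  {m m0 : MeasurableSpace α} {μ : Measure α} {f g : α → E} {s : Set α}

theorem condExp_indicator_add_indicator_compl (hf : Integrable f μ) (hg : Integrable g μ)
    (hm : m ≤ m0) (hs : MeasurableSet[m] s) :
    μ[s.indicator f + sᶜ.indicator g | m] =ᵐ[μ] s.indicator (μ[f|m]) + sᶜ.indicator (μ[g|m]) :=
  (condExp_add (hf.indicator (hm s hs)) (hg.indicator (hm s hs).compl) m).trans
    ((condExp_indicator hf hs).add (condExp_indicator hg hs.compl))

end

theorem indicator_lt_add_indicator_compl_eq_max {α β : Type*} [LinearOrder β] [AddZeroClass β]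
    (a b : α → β) :
    {x | b x < a x}.indicator a + {x | b x < a x}ᶜ.indicator b = fun x => max (a x) (b x) := by
  funext x
  by_cases h : b x < a x
  · simp [h, h.le]
  · simp [h, not_lt.mp h]

theorem stmt0_general {Ω : Type*} [𝓕 : MeasurableSpace Ω] {P : Measure Ω}
    (m : MeasurableSpace Ω) (hm : m ≤ 𝓕) {X Y : Ω → ℝ}
    (hX : Integrable X P) (hY : Integrable Y P) :
    MeasurableSet[m] {ω | (P[X|m]) ω > (P[Y|m]) ω} ∧
    Integrable (fun ω => ({ω | (P[X|m]) ω > (P[Y|m]) ω}).indicator X ω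
      + ({ω | (P[X|m]) ω > (P[Y|m]) ω})ᶜ.indicator Y ω) P ∧
    P[(fun ω => ({ω | (P[X|m]) ω > (P[Y|m]) ω}).indicator X ω
      + ({ω | (P[X|m]) ω > (P[Y|m]) ω})ᶜ.indicator Y ω)|m]
      =ᵐ[P] fun ω => max ((P[X|m]) ω) ((P[Y|m]) ω) := by
  set G : Set Ω := {ω | (P[X|m]) ω > (P[Y|m]) ω}
  have hG : MeasurableSet[m] G :=
    measurableSet_lt stronglyMeasurable_condExp.measurable stronglyMeasurable_condExp.measurable
  refine ⟨hG, (hX.indicator (hm G hG)).add (hY.indicator (hm G hG).compl), ?_⟩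
  exact (condExp_indicator_add_indicator_compl hX hY hm hG).trans
    (indicator_lt_add_indicator_compl_eq_max _ _).eventuallyEq

/-- Lattice property by finite mixing of two controls: if `G = {E[X|m] > E[Y|m]}`,
then `G` is `m`-measurable, `Z = X·1_G + Y·1_{Gᶜ}` is integrable and
`E[Z|m] = max(E[X|m], E[Y|m])` a.e. -/
theorem stmt0 {Ω : Type*} [𝓕 : MeasurableSpace Ω] {P : Measure Ω} [IsProbabilityMeasure P]
    (m : MeasurableSpace Ω) (hm : m ≤ 𝓕) {X Y : Ω → ℝ}
    (hX : Integrable X P) (hY : Integrable Y P) :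
    MeasurableSet[m] {ω | (P[X|m]) ω > (P[Y|m]) ω} ∧
    Integrable (fun ω => ({ω | (P[X|m]) ω > (P[Y|m]) ω}).indicator X ω
      + ({ω | (P[X|m]) ω > (P[Y|m]) ω})ᶜ.indicator Y ω) P ∧
    P[(fun ω => ({ω | (P[X|m]) ω > (P[Y|m]) ω}).indicator X ω
      + ({ω | (P[X|m]) ω > (P[Y|m]) ω})ᶜ.indicator Y ω)|m]
      =ᵐ[P] fun ω => max ((P[X|m]) ω) ((P[Y|m]) ω) :=
  stmt0_general (𝓕 := 𝓕) m hm hX hY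
end

section
/- Let T > 0, let μ be a finite signed measure on ℝ with total variation norm ‖μ‖, and define g : [0,T] → ℝ by g(t) := μ([0,t]). Let f : [0,T] → ℝ be a bounded measurable function and ε > 0. Suppose there exists a continuous, strictly increasing bijection λ : [0,T] → [0,T] with λ(0)=0, λ(T)=T, such that sup_{t∈[0,T]} |λ(t) − t| ≤ ε and sup_{t∈[0,T]} |f(t) − g(λ(t))| ≤ ε. Then ( ∫_0^T |f(t) − g(t)|² dt )^{1/2} ≤ √T · ε + √ε · ‖μ‖. (This is the paper's lemma comparing the L²([0,T]) distance of two paths with their Skorokhod-type distance, made precise with the total variation of g in place of the constant 5‖f‖_∞ ∨ 5.) -/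
/-!
Write `f - g = (f - g ∘ λ) + (g ∘ λ - g)` and apply Minkowski's inequality in `L²(0, T)`.
The first summand is at most `ε` pointwise. For the second, `|g (λ t) - g t| ≤ |μ| (I t)` with
`I t` the interval between `t` and `λ t`, so `∫ |g ∘ λ - g|² ≤ ‖μ‖ ∫ |μ| (I t) dt`, and by
Tonelli `∫ |μ| (I t) dt = ∫ Leb {t | s ∈ I t} d|μ|(s) ≤ ε ‖μ‖`: since `λ` is monotone and
`ε`-close to the identity, the times `t` with `s ∈ I t` form a set of length at most `ε`.
-/

open MeasureTheory Set
open scoped ENNReal Interval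

namespace MeasureTheory.SignedMeasure

theorem measurable_apply_Icc (μ : SignedMeasure ℝ) (a : ℝ) :
    Measurable fun t => μ (Icc a t) := by
  have hmono (m : Measure ℝ) [IsFiniteMeasure m] : Monotone fun t => m.real (Icc a t) :=
    fun _ _ hst => measureReal_mono (Icc_subset_Icc_right hst)
  simp_rw [μ.apply_eq_posPart_real_sub_negPart_real measurableSet_Icc]
  exact (hmono _).measurable.sub (hmono _).measurable

theorem enorm_apply_Icc_sub_le (μ : SignedMeasure ℝ) {c a b : ℝ} (ha : c ≤ a) (hb : c ≤ b) :
    ‖μ (Icc c b) - μ (Icc c a)‖ₑ ≤ μ.totalVariation (Ι a b) := by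
  wlog hab : a ≤ b generalizing a b
  · rw [enorm_sub_rev, uIoc_comm]
    exact this hb ha (le_of_not_ge hab)
  have hsplit : μ (Icc c b) = μ (Icc c a) + μ (Ioc a b) := by
    rw [← Icc_union_Ioc_eq_Icc ha hab]
    exact VectorMeasure.of_union ((Iic_disjoint_Ioc le_rfl).mono Icc_subset_Iic_self le_rfl)
      measurableSet_Icc measurableSet_Ioc
  rw [hsplit, add_sub_cancel_left, uIoc_of_le hab]
  exact μ.enorm_le_totalVariation _

end MeasureTheory.SignedMeasure

theorem MonotoneOn.monotone_piecewise_Icc_id {α : Type*} [LinearOrder α] {f : α → α} {a b : α}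
    (hf : MonotoneOn f (Icc a b)) (hmaps : MapsTo f (Icc a b) (Icc a b)) :
    Monotone ((Icc a b).piecewise f id) := by
  intro x y hxy
  by_cases hx : x ∈ Icc a b <;> by_cases hy : y ∈ Icc a b <;>
    simp only [piecewise_eq_of_mem, piecewise_eq_of_notMem, hx, hy, not_false_eq_true, id]
  · exact hf hx hy hxy
  · have hby : b < y := by
      by_contra! h
      exact hy ⟨hx.1.trans hxy, h⟩
    exact (hmaps hx).2.trans hby.le
  · have hxa : x < a := by
      by_contra! h
      exact hx ⟨h, hxy.trans hy.2⟩
    exact hxa.le.trans (hmaps hy).1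
  · exact hxy

theorem abs_piecewise_id_sub_le {s : Set ℝ} [DecidablePred (· ∈ s)] {f : ℝ → ℝ} {ε : ℝ}
    (hε : 0 ≤ ε) (hf : ∀ t ∈ s, |f t - t| ≤ ε) (t : ℝ) : |s.piecewise f id t - t| ≤ ε := by
  by_cases ht : t ∈ s
  · simpa [ht] using hf t ht
  · simpa [ht] using hε

theorem measurableSet_setOf_mem_uIoc {L : ℝ → ℝ} (hL : Measurable L) :
    MeasurableSet {p : ℝ × ℝ | p.2 ∈ Ι p.1 (L p.1)} :=
  (measurableSet_lt (measurable_fst.min (hL.comp measurable_fst)) measurable_snd).inter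
    (measurableSet_le measurable_snd (measurable_fst.max (hL.comp measurable_fst)))

theorem volume_setOf_mem_uIoc_le {L : ℝ → ℝ} (hL : Monotone L) {ε : ℝ}
    (hε : ∀ t, |L t - t| ≤ ε) (s : ℝ) :
    volume {t | s ∈ Ι t (L t)} ≤ ENNReal.ofReal ε := by
  -- by monotonicity of `L`, these times `t` lie either all to the left or all to the right of `s`
  by_cases hleft : ∃ t₀ < s, s ∈ Ι t₀ (L t₀)
  · obtain ⟨t₀, ht₀s, ht₀⟩ := hleft
    have hsL : s ≤ L t₀ := by
      rcases mem_uIoc.1 ht₀ with h | h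
      · exact h.2
      · linarith [h.2]
    calc volume {t | s ∈ Ι t (L t)} ≤ volume (Ico (s - ε) s) := by
          refine measure_mono fun t ht => ?_
          rcases mem_uIoc.1 ht with h | h
          · exact ⟨by linarith [(abs_le.1 (hε t)).2], h.1⟩
          · linarith [hL (ht₀s.trans_le h.2).le]
      _ = ENNReal.ofReal ε := by rw [Real.volume_Ico, sub_sub_cancel]
  · push Not at hleft
    calc volume {t | s ∈ Ι t (L t)} ≤ volume (Ico s (s + ε)) := by
          refine measure_mono fun t ht => ?_
          have hst : s ≤ t := not_lt.1 fun h => hleft t h ht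
          rcases mem_uIoc.1 ht with h | h
          · linarith [h.1]
          · exact ⟨hst, by linarith [(abs_le.1 (hε t)).1]⟩
      _ = ENNReal.ofReal ε := by rw [Real.volume_Ico, add_sub_cancel_left]

theorem lintegral_measure_uIoc_le {ρ ν : Measure ℝ} [SFinite ρ] [SFinite ν] (hρ : ρ ≤ volume)
    {L : ℝ → ℝ} (hL : Monotone L) {ε : ℝ} (hε : ∀ t, |L t - t| ≤ ε) :
    ∫⁻ t, ν (Ι t (L t)) ∂ρ ≤ ENNReal.ofReal ε * ν univ := by
  have hS := measurableSet_setOf_mem_uIoc hL.measurable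
  calc ∫⁻ t, ν (Ι t (L t)) ∂ρ = ρ.prod ν {p | p.2 ∈ Ι p.1 (L p.1)} :=
        (Measure.prod_apply hS).symm
    _ = ∫⁻ s, ρ {t | s ∈ Ι t (L t)} ∂ν := Measure.prod_apply_symm hS
    _ ≤ ∫⁻ _, ENNReal.ofReal ε ∂ν :=
        lintegral_mono fun s => (hρ _).trans (volume_setOf_mem_uIoc_le hL hε s)
    _ = ENNReal.ofReal ε * ν univ := lintegral_const _

theorem eLpNorm_two_le_of_enorm_le_measure_uIoc {ρ ν : Measure ℝ} [SFinite ρ]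
    [IsFiniteMeasure ν] (hρ : ρ ≤ volume) {L : ℝ → ℝ} (hL : Monotone L) {ε : ℝ}
    (hε : ∀ t, |L t - t| ≤ ε) {F : ℝ → ℝ} (hF : ∀ᵐ t ∂ρ, ‖F t‖ₑ ≤ ν (Ι t (L t))) :
    eLpNorm F 2 ρ ≤ ENNReal.ofReal √ε * ν univ := by
  have hε0 : 0 ≤ ε := (abs_nonneg _).trans (hε 0)
  have hsq : ∫⁻ t, ‖F t‖ₑ ^ (2 : ℝ) ∂ρ ≤ ENNReal.ofReal ε * ν univ ^ (2 : ℝ) := by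
    calc ∫⁻ t, ‖F t‖ₑ ^ (2 : ℝ) ∂ρ ≤ ∫⁻ t, ν univ * ν (Ι t (L t)) ∂ρ := by
          refine lintegral_mono_ae (hF.mono fun t ht => ?_)
          rw [ENNReal.rpow_two, sq]
          exact mul_le_mul' (ht.trans (measure_mono (subset_univ _))) ht
      _ ≤ ν univ * (ENNReal.ofReal ε * ν univ) := by
          rw [lintegral_const_mul' _ _ (measure_ne_top _ _)]
          gcongr
          exact lintegral_measure_uIoc_le hρ hL hε
      _ = ENNReal.ofReal ε * ν univ ^ (2 : ℝ) := by rw [ENNReal.rpow_two]; ring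
  rw [eLpNorm_eq_lintegral_rpow_enorm_toReal two_ne_zero ENNReal.ofNat_ne_top,
    ENNReal.toReal_ofNat]
  calc (∫⁻ t, ‖F t‖ₑ ^ (2 : ℝ) ∂ρ) ^ (1 / 2 : ℝ)
      ≤ (ENNReal.ofReal ε * ν univ ^ (2 : ℝ)) ^ (1 / 2 : ℝ) := by gcongr
    _ = ENNReal.ofReal √ε * ν univ := by
        rw [ENNReal.mul_rpow_of_nonneg _ _ (by norm_num), ← ENNReal.rpow_mul,
          ENNReal.ofReal_rpow_of_nonneg hε0 (by norm_num), ← Real.sqrt_eq_rpow]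
        norm_num

theorem sqrt_integral_sq_eq_toReal_eLpNorm {α : Type*} [MeasurableSpace α] {μ : Measure α}
    {F : α → ℝ} (hF : AEStronglyMeasurable F μ) :
    √(∫ x, F x ^ 2 ∂μ) = (eLpNorm F 2 μ).toReal := by
  rw [eLpNorm_eq_lintegral_rpow_enorm_toReal two_ne_zero ENNReal.ofNat_ne_top,
    ENNReal.toReal_ofNat, ← ENNReal.toReal_rpow, Real.sqrt_eq_rpow,
    integral_eq_lintegral_of_nonneg_ae (ae_of_all _ fun x => sq_nonneg (F x)) (hF.pow 2)]
  congr 3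
  funext x
  rw [ENNReal.rpow_two, Real.enorm_eq_ofReal_abs, ← ENNReal.ofReal_pow (abs_nonneg _), sq_abs]

theorem eLpNorm_two_restrict_Ioc_le {E : Type*} [NormedAddCommGroup E] {F : ℝ → E} {a b C : ℝ}
    (hab : a ≤ b) (hF : ∀ t ∈ Ioc a b, ‖F t‖ ≤ C) :
    eLpNorm F 2 (volume.restrict (Ioc a b)) ≤ ENNReal.ofReal √(b - a) * ENNReal.ofReal C := by
  refine (eLpNorm_le_of_ae_bound (ae_restrict_of_forall_mem measurableSet_Ioc hF)).trans_eq ?_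
  rw [Measure.restrict_apply_univ, Real.volume_Ioc, ENNReal.toReal_ofNat,
    ENNReal.ofReal_rpow_of_nonneg (sub_nonneg.2 hab) (by norm_num), Real.sqrt_eq_rpow, one_div]

theorem stmt8_general (T : ℝ) (hT : 0 < T) (μ : SignedMeasure ℝ)
    (g : ℝ → ℝ) (hg : ∀ t, g t = μ (Set.Icc 0 t))
    (f : ℝ → ℝ) (hfm : Measurable f)
    (ε : ℝ) (hε : 0 < ε)
    (lam : ℝ → ℝ)
    (hmono : StrictMonoOn lam (Set.Icc 0 T))
    (hbij : Set.BijOn lam (Set.Icc 0 T) (Set.Icc 0 T))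
    (h1 : ∀ t ∈ Set.Icc (0 : ℝ) T, |lam t - t| ≤ ε)
    (h2 : ∀ t ∈ Set.Icc (0 : ℝ) T, |f t - g (lam t)| ≤ ε) :
    Real.sqrt (∫ t in (0 : ℝ)..T, |f t - g t| ^ 2) ≤
      Real.sqrt T * ε + Real.sqrt ε * (μ.totalVariation Set.univ).toReal := by
  set ν := μ.totalVariation
  set ρ := volume.restrict (Ioc 0 T)
  set L := (Icc 0 T).piecewise lam id
  have hL : Monotone L := hmono.monotoneOn.monotone_piecewise_Icc_id hbij.mapsTo
  have hLε := abs_piecewise_id_sub_le hε.le h1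
  have hgm : Measurable g := funext hg ▸ μ.measurable_apply_Icc 0
  have hfirst : eLpNorm (fun t => f t - g (lam t)) 2 ρ ≤
      ENNReal.ofReal √T * ENNReal.ofReal ε := by
    simpa using eLpNorm_two_restrict_Ioc_le hT.le fun t ht => h2 t (Ioc_subset_Icc_self ht)
  have hsecond : eLpNorm (fun t => g (lam t) - g t) 2 ρ ≤ ENNReal.ofReal √ε * ν univ := by
    refine eLpNorm_two_le_of_enorm_le_measure_uIoc Measure.restrict_le_self hL hLε
      (ae_restrict_of_forall_mem measurableSet_Ioc fun t ht => ?_)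
    have ht' := Ioc_subset_Icc_self ht
    simp only [L, piecewise_eq_of_mem _ _ _ ht', hg]
    exact μ.enorm_apply_Icc_sub_le ht'.1 (hbij.mapsTo ht').1
  have hsplit : (fun t => f t - g t) = (fun t => f t - g (lam t)) + fun t => g (lam t) - g t := by
    funext t; simp
  have hGm : AEStronglyMeasurable (fun t => g (lam t)) ρ :=
    (hgm.comp hL.measurable).aestronglyMeasurable.congr <|
      ae_restrict_of_forall_mem measurableSet_Ioc fun t ht => by simp [L, Ioc_subset_Icc_self ht]
  calc √(∫ t in (0 : ℝ)..T, |f t - g t| ^ 2)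
      = (eLpNorm (fun t => f t - g t) 2 ρ).toReal := by
        simp_rw [intervalIntegral.integral_of_le hT.le, sq_abs]
        exact sqrt_integral_sq_eq_toReal_eLpNorm (hfm.sub hgm).aestronglyMeasurable
    _ ≤ (ENNReal.ofReal √T * ENNReal.ofReal ε + ENNReal.ofReal √ε * ν univ).toReal := by
        refine ENNReal.toReal_mono (by finiteness) ?_
        rw [hsplit]
        exact (eLpNorm_add_le (hfm.aestronglyMeasurable.sub hGm)
          (hGm.sub hgm.aestronglyMeasurable) one_le_two).trans (add_le_add hfirst hsecond)
    _ = √T * ε + √ε * (ν univ).toReal := by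
        rw [ENNReal.toReal_add (by finiteness) (by finiteness)]
        simp [hε.le]

/-- Comparison of the `L²([0,T])` distance with the Skorokhod-type distance: if
`g(t) = μ([0,t])` for a finite signed measure `μ` and `λ` is a time change with
`sup|λ − id| ≤ ε` and `sup|f − g∘λ| ≤ ε`, then
`(∫₀ᵀ |f−g|²)^{1/2} ≤ √T·ε + √ε·‖μ‖`. -/
theorem stmt8 (T : ℝ) (hT : 0 < T) (μ : SignedMeasure ℝ)
    (g : ℝ → ℝ) (hg : ∀ t, g t = μ (Set.Icc 0 t))
    (f : ℝ → ℝ) (hfm : Measurable f) (hfb : ∃ C, ∀ t ∈ Set.Icc (0 : ℝ) T, |f t| ≤ C)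
    (ε : ℝ) (hε : 0 < ε)
    (lam : ℝ → ℝ) (hcont : ContinuousOn lam (Set.Icc 0 T))
    (hmono : StrictMonoOn lam (Set.Icc 0 T))
    (hbij : Set.BijOn lam (Set.Icc 0 T) (Set.Icc 0 T))
    (h0 : lam 0 = 0) (hlamT : lam T = T)
    (h1 : ∀ t ∈ Set.Icc (0 : ℝ) T, |lam t - t| ≤ ε)
    (h2 : ∀ t ∈ Set.Icc (0 : ℝ) T, |f t - g (lam t)| ≤ ε) :
    Real.sqrt (∫ t in (0 : ℝ)..T, |f t - g t| ^ 2) ≤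
      Real.sqrt T * ε + Real.sqrt ε * (μ.totalVariation Set.univ).toReal :=
  stmt8_general T hT μ g hg f hfm ε hε lam hmono hbij h1 h2
end

section
/- Let T > 0, let μ be a finite signed measure on ℝ with total variation norm ‖μ‖, define g : [0,T] → ℝ by g(t) := μ([0,t]), and let ε > 0. Let λ : [0,T] → [0,T] be a continuous, strictly increasing bijection with λ(0)=0, λ(T)=T and sup_{t∈[0,T]} |λ(t) − t| ≤ ε. Then ∫_0^T | g(λ(t)) − g(t) |² dt ≤ ε · ‖μ‖². (This is the key intermediate estimate in the paper's proof of the comparison between the L² distance and the Skorokhod distance, obtained by writing the squared integrand as a double integral against μ⊗μ via Fubini's theorem.) -/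
/-!
Write `ν = |μ|`. For `t ∈ [0,T]` the increment `g(λ t) - g t` is `±μ` of the interval between
`t` and `λ t`, so `|g(λ t) - g t|² ≤ ν(Ι t (λ t)) · ‖μ‖`. By Tonelli,
`∫₀ᵀ ν(Ι t (λ t)) dt = ∫ Leb {t ∈ [0,T] | x ∈ Ι t (λ t)} dν(x)`, and since `λ` is increasing,
the times `t` whose interval contains `x = λ s` lie between `s` and `λ s`, a set of length
at most `ε`.
-/

open MeasureTheory Set

open scoped ENNReal Interval

theorem StrictMonoOn.mem_uIcc_of_apply_mem_uIoc {α : Type*} [LinearOrder α] {f : α → α}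
    {s : Set α} (hf : StrictMonoOn f s) {t u : α} (ht : t ∈ s) (hu : u ∈ s)
    (h : f u ∈ Ι t (f t)) : t ∈ uIcc u (f u) := by
  rcases le_total t (f t) with htf | htf
  · rw [uIoc_of_le htf] at h
    exact mem_uIcc_of_le ((hf.le_iff_le hu ht).mp h.2) h.1.le
  · rw [uIoc_of_ge htf] at h
    exact mem_uIcc_of_ge h.2 ((hf.lt_iff_lt ht hu).mp h.1).le

theorem volume_setOf_mem_uIoc_inter_Icc_le {lam : ℝ → ℝ} {a b ε : ℝ}
    (hmono : StrictMonoOn lam (Icc a b)) (hbij : BijOn lam (Icc a b) (Icc a b))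
    (hclose : ∀ t ∈ Icc a b, |lam t - t| ≤ ε) (x : ℝ) :
    volume ({t | x ∈ Ι t (lam t)} ∩ Icc a b) ≤ ENNReal.ofReal ε := by
  by_cases hx : x ∈ Icc a b
  · obtain ⟨s, hs, rfl⟩ := hbij.surjOn hx
    calc volume ({t | lam s ∈ Ι t (lam t)} ∩ Icc a b)
        ≤ volume (uIcc s (lam s)) :=
          measure_mono fun t ⟨hst, ht⟩ => hmono.mem_uIcc_of_apply_mem_uIoc ht hs hst
      _ = ENNReal.ofReal |lam s - s| := Real.volume_interval
      _ ≤ ENNReal.ofReal ε := ENNReal.ofReal_le_ofReal (hclose s hs)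
  · have hempty : {t | x ∈ Ι t (lam t)} ∩ Icc a b ⊆ ∅ := fun t ⟨hxt, ht⟩ =>
      hx (uIcc_subset_Icc ht (hbij.mapsTo ht) (uIoc_subset_uIcc hxt))
    exact (measure_mono_null hempty measure_empty).trans_le zero_le

theorem measurableSet_setOf_snd_mem_uIoc {f : ℝ → ℝ} (hf : Measurable f) :
    MeasurableSet {q : ℝ × ℝ | q.2 ∈ Ι q.1 (f q.1)} :=
  (measurableSet_lt (measurable_fst.min (hf.comp measurable_fst)) measurable_snd).inter
    (measurableSet_le measurable_snd (measurable_fst.max (hf.comp measurable_fst)))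

theorem MeasureTheory.SignedMeasure.enorm_apply_Icc_sub_apply_Icc_le {α : Type*} [LinearOrder α]
    [TopologicalSpace α] [OrderClosedTopology α] [MeasurableSpace α] [OpensMeasurableSpace α]
    (μ : SignedMeasure α) {c a b : α} (ha : c ≤ a) (hb : c ≤ b) :
    ‖μ (Icc c b) - μ (Icc c a)‖ₑ ≤ μ.totalVariation (Ι a b) := by
  wlog hab : a ≤ b generalizing a b
  · rw [enorm_sub_rev, uIoc_comm]
    exact this hb ha (le_of_not_ge hab)
  have hdisj : Disjoint (Icc c a) (Ioc a b) :=
    disjoint_left.mpr fun _ hx hx' => (not_lt.mpr hx.2) hx'.1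
  rw [← Icc_union_Ioc_eq_Icc ha hab, VectorMeasure.of_union hdisj measurableSet_Icc
    measurableSet_Ioc, add_sub_cancel_left, uIoc_of_le hab]
  exact μ.enorm_le_totalVariation _

theorem integral_sq_le_of_enorm_le_measure_slice {α β : Type*} [MeasurableSpace α]
    [MeasurableSpace β] (μ : Measure α) [SFinite μ] (ν : Measure β) [IsFiniteMeasure ν]
    {S : Set (α × β)} (hS : MeasurableSet S) {f : α → ℝ}
    (hf : ∀ᵐ t ∂μ, ‖f t‖ₑ ≤ ν (Prod.mk t ⁻¹' S)) {ε : ℝ} (hε : 0 ≤ ε)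
    (hslice : ∀ x, μ ((fun t => (t, x)) ⁻¹' S) ≤ ENNReal.ofReal ε) :
    ∫ t, |f t| ^ 2 ∂μ ≤ ε * ν.real univ ^ 2 := by
  have hlintegral : ∫⁻ t, ‖f t‖ₑ ^ 2 ∂μ ≤ ENNReal.ofReal ε * ν univ * ν univ :=
    calc ∫⁻ t, ‖f t‖ₑ ^ 2 ∂μ ≤ ∫⁻ t, ν (Prod.mk t ⁻¹' S) * ν univ ∂μ := by
          refine lintegral_mono_ae (hf.mono fun t ht => ?_)
          rw [sq]
          exact mul_le_mul' ht (ht.trans (measure_mono (subset_univ _)))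
      _ = μ.prod ν S * ν univ := by
          rw [lintegral_mul_const' _ _ (measure_ne_top _ _), Measure.prod_apply hS]
      _ = (∫⁻ x, μ ((fun t => (t, x)) ⁻¹' S) ∂ν) * ν univ := by
          rw [Measure.prod_apply_symm hS]
      _ ≤ ENNReal.ofReal ε * ν univ * ν univ := by
          gcongr
          exact (lintegral_mono hslice).trans_eq (lintegral_const _)
  have hofReal : ∀ t, ENNReal.ofReal ‖|f t| ^ 2‖ = ‖f t‖ₑ ^ 2 := fun t => by
    rw [Real.norm_of_nonneg (by positivity), ENNReal.ofReal_pow (abs_nonneg _),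
      Real.enorm_eq_ofReal_abs]
  calc ∫ t, |f t| ^ 2 ∂μ ≤ ‖∫ t, |f t| ^ 2 ∂μ‖ := Real.le_norm_self _
    _ ≤ (∫⁻ t, ‖f t‖ₑ ^ 2 ∂μ).toReal := by
        rw [← lintegral_congr hofReal]
        exact norm_integral_le_lintegral_norm _
    _ ≤ (ENNReal.ofReal ε * ν univ * ν univ).toReal :=
        ENNReal.toReal_mono (by finiteness) hlintegral
    _ = ε * ν.real univ ^ 2 := by
        simp only [ENNReal.toReal_mul, ENNReal.toReal_ofReal hε, measureReal_def]
        ring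

theorem stmt9_general (T : ℝ) (hT : 0 < T) (μ : SignedMeasure ℝ)
    (g : ℝ → ℝ) (hg : ∀ t, g t = μ (Set.Icc 0 t))
    (ε : ℝ) (hε : 0 < ε)
    (lam : ℝ → ℝ)
    (hmono : StrictMonoOn lam (Set.Icc 0 T))
    (hbij : Set.BijOn lam (Set.Icc 0 T) (Set.Icc 0 T))
    (h1 : ∀ t ∈ Set.Icc (0 : ℝ) T, |lam t - t| ≤ ε) :
    ∫ t in (0 : ℝ)..T, |g (lam t) - g t| ^ 2 ≤
      ε * (μ.totalVariation Set.univ).toReal ^ 2 := by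
  -- A monotone, hence measurable, extension of `lam` to `ℝ`, making the set of pairs
  -- `(t, x)` with `x ∈ Ι t (L t)` measurable.
  set L : ℝ → ℝ := IccExtend hT.le fun t => lam t
  have hL : EqOn L lam (Icc 0 T) := fun t ht => IccExtend_of_mem hT.le _ ht
  have hLmono : Monotone L := Monotone.IccExtend _ fun a b hab => hmono.monotoneOn a.2 b.2 hab
  rw [intervalIntegral.integral_of_le hT.le, ← integral_Icc_eq_integral_Ioc]
  refine integral_sq_le_of_enorm_le_measure_slice _ μ.totalVariation
    (measurableSet_setOf_snd_mem_uIoc hLmono.measurable) ?_ hε.le fun x => ?_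
  · filter_upwards [ae_restrict_mem measurableSet_Icc] with t ht
    rw [hg, hg, ← hL ht]
    exact μ.enorm_apply_Icc_sub_apply_Icc_le ht.1 (hL ht ▸ (hbij.mapsTo ht).1)
  · rw [Measure.restrict_apply' measurableSet_Icc]
    have hsub : {t | x ∈ Ι t (L t)} ∩ Icc 0 T ⊆ {t | x ∈ Ι t (lam t)} ∩ Icc 0 T :=
      fun t ⟨hxt, ht⟩ => ⟨show x ∈ Ι t (lam t) from hL ht ▸ hxt, ht⟩
    exact (measure_mono hsub).trans (volume_setOf_mem_uIoc_inter_Icc_le hmono hbij h1 x)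

/-- Key intermediate estimate: for `g(t) = μ([0,t])` with `μ` a finite signed measure
and a time change `λ` with `sup|λ − id| ≤ ε`, one has
`∫₀ᵀ |g(λ(t)) − g(t)|² dt ≤ ε·‖μ‖²`. -/
theorem stmt9 (T : ℝ) (hT : 0 < T) (μ : SignedMeasure ℝ)
    (g : ℝ → ℝ) (hg : ∀ t, g t = μ (Set.Icc 0 t))
    (ε : ℝ) (hε : 0 < ε)
    (lam : ℝ → ℝ) (hcont : ContinuousOn lam (Set.Icc 0 T))
    (hmono : StrictMonoOn lam (Set.Icc 0 T))
    (hbij : Set.BijOn lam (Set.Icc 0 T) (Set.Icc 0 T))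
    (h0 : lam 0 = 0) (hlamT : lam T = T)
    (h1 : ∀ t ∈ Set.Icc (0 : ℝ) T, |lam t - t| ≤ ε) :
    ∫ t in (0 : ℝ)..T, |g (lam t) - g t| ^ 2 ≤
      ε * (μ.totalVariation Set.univ).toReal ^ 2 :=
  stmt9_general T hT μ g hg ε hε lam hmono hbij h1
end

section
/- Let T > 0 and let λ : [0,T] → [0,T] be a continuous, strictly increasing bijection with λ(0)=0 and λ(T)=T. Then for every u ∈ [0,T], ∫_0^T | 1_{[0,λ(t)]}(u) − 1_{[0,t]}(u) | dt ≤ | u − λ^{-1}(u) | ≤ sup_{x ∈ [0,T]} | x − λ(x) |. (This indicator-function estimate, based on the equivalences t < u ≤ λ(t) ⟺ λ^{-1}(u) ≤ t < u and λ(t) < u ≤ t ⟺ u ≤ t < λ^{-1}(u), is the combinatorial heart of the paper's L²-versus-Skorokhod distance lemma.) -/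
/-!
With `v = λ⁻¹(u)`, monotonicity gives `u ≤ λ(t) ↔ v ≤ t`, so the integrand is the indicator of
`t` lying between `u` and `v`, i.e. of `[min u v, max u v)`; its integral is at most `|u - v|`.
Since `u = λ(v)`, this equals `|v - λ(v)|`, one of the values in the supremum.
-/

open MeasureTheory Set

lemma abs_indicator_Icc_sub_indicator_Icc {u v s t : ℝ} (hu : 0 ≤ u) (h : u ≤ s ↔ v ≤ t) :
    |(Icc 0 s).indicator (fun _ => (1 : ℝ)) u - (Icc 0 t).indicator (fun _ => (1 : ℝ)) u| =
      (Ico (min u v) (max u v)).indicator (fun _ => (1 : ℝ)) t := by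
  simp only [indicator_apply, mem_Icc, hu, true_and, h, mem_Ico, min_le_iff, lt_max_iff]
  split_ifs <;> grind

lemma intervalIntegral_indicator_Ico_le {a b c d : ℝ} (hab : a ≤ b) (hcd : c ≤ d) :
    ∫ t in c..d, (Ico a b).indicator (fun _ => (1 : ℝ)) t ≤ b - a := by
  rw [intervalIntegral.integral_of_le hcd, setIntegral_indicator measurableSet_Ico,
    setIntegral_const, smul_eq_mul, mul_one, ← Real.volume_real_Ico_of_le hab]
  exact measureReal_mono inter_subset_right measure_Ico_lt_top.ne

lemma bddAbove_range_abs_sub_of_mapsTo {T : ℝ} {f : ℝ → ℝ} (hf : MapsTo f (Icc 0 T) (Icc 0 T)) :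
    BddAbove (range fun x : Icc (0 : ℝ) T => |(x : ℝ) - f x|) := by
  refine ⟨T, ?_⟩
  rintro _ ⟨x, rfl⟩
  have hx := x.2
  have hfx := hf hx
  exact abs_sub_le_iff.2 ⟨by linarith [hx.2, hfx.1], by linarith [hx.1, hfx.2]⟩

theorem stmt10_general (T : ℝ)
    (lam ν : ℝ → ℝ)
    (hmono : StrictMonoOn lam (Set.Icc 0 T))
    (hbij : Set.BijOn lam (Set.Icc 0 T) (Set.Icc 0 T))
    (hinv1 : ∀ t ∈ Set.Icc (0 : ℝ) T, ν (lam t) = t)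
    (hinv2 : ∀ u ∈ Set.Icc (0 : ℝ) T, lam (ν u) = u)
    (u : ℝ) (hu : u ∈ Set.Icc (0 : ℝ) T) :
    (∫ t in (0 : ℝ)..T,
        |(Set.Icc (0 : ℝ) (lam t)).indicator (fun _ => (1 : ℝ)) u
          - (Set.Icc (0 : ℝ) t).indicator (fun _ => (1 : ℝ)) u|) ≤ |u - ν u| ∧
      |u - ν u| ≤ ⨆ x : Set.Icc (0 : ℝ) T, |(x : ℝ) - lam x| := by
  have hν : ν u ∈ Icc 0 T := by
    obtain ⟨t, ht, rfl⟩ := hbij.surjOn hu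
    rwa [hinv1 t ht]
  have hlamν : lam (ν u) = u := hinv2 u hu
  have hiff : ∀ t ∈ Icc 0 T, u ≤ lam t ↔ ν u ≤ t := fun t ht => by
    rw [← hmono.le_iff_le hν ht, hlamν]
  refine ⟨?_, ?_⟩
  · calc _ = ∫ t in (0 : ℝ)..T, (Ico (min u (ν u)) (max u (ν u))).indicator (fun _ => 1) t :=
          intervalIntegral.integral_congr fun t ht =>
            abs_indicator_Icc_sub_indicator_Icc hu.1 <| hiff t <| by
              rwa [uIcc_of_le (hu.1.trans hu.2)] at ht
      _ ≤ max u (ν u) - min u (ν u) :=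
          intervalIntegral_indicator_Ico_le min_le_max (hu.1.trans hu.2)
      _ = |u - ν u| := max_sub_min_eq_abs' _ _
  · calc |u - ν u| = |ν u - lam (ν u)| := by rw [hlamν, abs_sub_comm]
      _ ≤ _ := le_ciSup (bddAbove_range_abs_sub_of_mapsTo hbij.mapsTo) ⟨ν u, hν⟩

/-- Indicator-function estimate: for a continuous strictly increasing bijection
`λ : [0,T] → [0,T]` fixing the endpoints, with inverse `ν`, and `u ∈ [0,T]`,
`∫₀ᵀ |1_{[0,λ(t)]}(u) − 1_{[0,t]}(u)| dt ≤ |u − ν(u)| ≤ sup_{x∈[0,T]} |x − λ(x)|`. -/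
theorem stmt10 (T : ℝ) (hT : 0 < T)
    (lam ν : ℝ → ℝ) (hcont : ContinuousOn lam (Set.Icc 0 T))
    (hmono : StrictMonoOn lam (Set.Icc 0 T))
    (hbij : Set.BijOn lam (Set.Icc 0 T) (Set.Icc 0 T))
    (h0 : lam 0 = 0) (hlamT : lam T = T)
    (hinv1 : ∀ t ∈ Set.Icc (0 : ℝ) T, ν (lam t) = t)
    (hinv2 : ∀ u ∈ Set.Icc (0 : ℝ) T, lam (ν u) = u)
    (u : ℝ) (hu : u ∈ Set.Icc (0 : ℝ) T) :
    (∫ t in (0 : ℝ)..T,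
        |(Set.Icc (0 : ℝ) (lam t)).indicator (fun _ => (1 : ℝ)) u
          - (Set.Icc (0 : ℝ) t).indicator (fun _ => (1 : ℝ)) u|) ≤ |u - ν u| ∧
      |u - ν u| ≤ ⨆ x : Set.Icc (0 : ℝ) T, |(x : ℝ) - lam x| :=
  stmt10_general T lam ν hmono hbij hinv1 hinv2 u hu
end
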